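/- Let Λ ⊆ ℝⁿ be a full-rank lattice with dual lattice Λ*. Then for every real P with 1 ≤ P < 2, the L_P minimum distances satisfy d_P(Λ) · d_P(Λ*) ≤ n^{2/P}. -/

import Mathlib

/-- The `L_P` minimum distance of a subset of `ℝⁿ`. -/
noncomputable def lpDistR (n : ℕ) (P : ℝ) (S : Set (Fin n → ℝ)) : ℝ :=
  sInf {d : ℝ | ∃ x ∈ S, ∃ y ∈ S, x ≠ y ∧ d = (∑ i, |x i - y i| ^ P) ^ (1 / P)}

/-- The dual lattice of a subset of `ℝⁿ`. -/
def dualLattice (n : ℕ) (L : Set (Fin n → ℝ)) : Set (Fin n → ℝ) :=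
  {y | ∀ x ∈ L, ∃ k : ℤ, ∑ i, y i * x i = (k : ℝ)}

/-!
Minkowski's theorem for the cube of half-side `|det B|^(1/n)` gives a nonzero vector of the
lattice spanned by the rows of `B` with all coordinates at most `|det B|^(1/n)` in absolute value,
so `d_P ≤ n^(1/P) |det B|^(1/n)`. The dual lattice is spanned by the rows of `(B⁻¹)ᵀ`, whose
determinant is `(det B)⁻¹`, so the determinants cancel in the product of the two bounds.
-/

open MeasureTheory Submodule Matrix

section Minkowski

variable {ι : Type*} [Fintype ι] [DecidableEq ι] [Nonempty ι]

theorem exists_ne_zero_mem_span_norm_le (c : Module.Basis ι ℝ (ι → ℝ)) {r : ℝ} (hr : 0 ≤ r)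
    (hdet : |(Matrix.of c).det| ≤ r ^ Fintype.card ι) :
    ∃ v ∈ span ℤ (Set.range c), v ≠ 0 ∧ ‖v‖ ≤ r := by
  have hvol : volume (ZSpan.fundamentalDomain c) * 2 ^ Module.finrank ℝ (ι → ℝ) ≤
      volume (Metric.closedBall (0 : ι → ℝ) r) := by
    rw [ZSpan.volume_fundamentalDomain, Real.volume_pi_closedBall _ hr,
      Module.finrank_fintype_fun_eq_card,
      ← ENNReal.ofReal_ofNat, ← ENNReal.ofReal_pow zero_le_two,
      ← ENNReal.ofReal_mul (abs_nonneg _), mul_pow, mul_comm (2 ^ _)]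
    gcongr
  have : Countable (span ℤ (Set.range c)).toAddSubgroup :=
    inferInstanceAs (Countable (span ℤ (Set.range c)))
  obtain ⟨x, hx0, hxr⟩ := exists_ne_zero_mem_lattice_of_measure_mul_two_pow_le_measure
    (ZSpan.isAddFundamentalDomain' c volume) (fun x hx => by simpa using hx)
    (convex_closedBall 0 r) (isCompact_closedBall 0 r) hvol
  exact ⟨x, x.2, by simpa using hx0, by simpa using hxr⟩

end Minkowski

theorem setOf_exists_sum_zsmul_eq_span {ι M : Type*} [Fintype ι] [AddCommGroup M] (b : ι → M) :
    {x | ∃ z : ι → ℤ, x = ∑ i, z i • b i} = span ℤ (Set.range b) := by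
  ext x
  simp only [Set.mem_ofPred_eq, SetLike.mem_coe, mem_span_range_iff_exists_fun, eq_comm]

section Lp

variable {n : ℕ} {P : ℝ}

theorem lpDistR_nonneg (S : Set (Fin n → ℝ)) : 0 ≤ lpDistR n P S := by
  refine Real.sInf_nonneg ?_
  rintro d ⟨x, -, y, -, -, rfl⟩
  positivity

theorem lpDistR_le_of_mem {S : Set (Fin n → ℝ)} (h0 : 0 ∈ S) {v : Fin n → ℝ} (hv : v ∈ S)
    (hv0 : v ≠ 0) : lpDistR n P S ≤ (∑ i, |v i| ^ P) ^ (1 / P) := by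
  refine csInf_le ⟨0, ?_⟩ ⟨v, hv, 0, h0, hv0, by simp⟩
  rintro d ⟨x, -, y, -, -, rfl⟩
  positivity

theorem lpDistR_eq_zero_of_subsingleton [Subsingleton (Fin n → ℝ)] (S : Set (Fin n → ℝ)) :
    lpDistR n P S = 0 := by
  refine (congrArg sInf (Set.eq_empty_of_forall_notMem ?_)).trans Real.sInf_empty
  rintro d ⟨x, -, y, -, hxy, -⟩
  exact hxy (Subsingleton.elim x y)

theorem rpow_sum_abs_rpow_le_card_rpow_mul_norm {ι : Type*} [Fintype ι] (hP : 0 < P)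
    (v : ι → ℝ) : (∑ i, |v i| ^ P) ^ (1 / P) ≤ (Fintype.card ι : ℝ) ^ (1 / P) * ‖v‖ := by
  calc (∑ i, |v i| ^ P) ^ (1 / P) ≤ (Fintype.card ι * ‖v‖ ^ P) ^ (1 / P) := by
        gcongr
        calc ∑ i, |v i| ^ P ≤ ∑ _i : ι, ‖v‖ ^ P := by
              gcongr with i
              exact norm_le_pi_norm v i
          _ = Fintype.card ι * ‖v‖ ^ P := by simp
    _ = (Fintype.card ι : ℝ) ^ (1 / P) * ‖v‖ := by
        rw [Real.mul_rpow (by positivity) (by positivity), ← Real.rpow_mul (norm_nonneg v),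
          mul_one_div_cancel hP.ne', Real.rpow_one]

end Lp

theorem lpDistR_span_rows_le {n : ℕ} {P : ℝ} (hP : 0 < P) {M : Matrix (Fin n) (Fin n) ℝ}
    (hM : M.det ≠ 0) :
    lpDistR n P (span ℤ (Set.range M)) ≤ (n : ℝ) ^ (1 / P) * |M.det| ^ ((n : ℝ)⁻¹) := by
  rcases n.eq_zero_or_pos with rfl | hn
  · rw [lpDistR_eq_zero_of_subsingleton]
    positivity
  have : Nonempty (Fin n) := ⟨⟨0, hn⟩⟩
  let c := basisOfLinearIndependentOfCardEqFinrank (linearIndependent_rows_of_det_ne_zero hM)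
    (by simp)
  have hc : ⇑c = M := coe_basisOfLinearIndependentOfCardEqFinrank _ _
  obtain ⟨v, hv, hv0, hvr⟩ := exists_ne_zero_mem_span_norm_le c
    (r := |M.det| ^ ((n : ℝ)⁻¹)) (by positivity)
    (le_of_eq (by rw [Fintype.card_fin, Real.rpow_inv_natCast_pow (abs_nonneg _) hn.ne', hc]; rfl))
  rw [hc] at hv
  calc lpDistR n P (span ℤ (Set.range M)) ≤ (∑ i, |v i| ^ P) ^ (1 / P) :=
        lpDistR_le_of_mem (zero_mem _) hv hv0
    _ ≤ (n : ℝ) ^ (1 / P) * ‖v‖ := by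
        simpa using rpow_sum_abs_rpow_le_card_rpow_mul_norm hP v
    _ ≤ (n : ℝ) ^ (1 / P) * |M.det| ^ ((n : ℝ)⁻¹) := by gcongr

theorem mem_dualLattice_span_iff {n : ℕ} {ι : Type*} (v : ι → Fin n → ℝ) (y : Fin n → ℝ) :
    y ∈ dualLattice n (span ℤ (Set.range v)) ↔ ∀ j, ∃ k : ℤ, y ⬝ᵥ v j = k := by
  refine ⟨fun h j => h (v j) (subset_span ⟨j, rfl⟩), fun h x hx => ?_⟩
  change ∃ k : ℤ, y ⬝ᵥ x = k
  induction hx using span_induction with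
  | mem x hx => obtain ⟨j, rfl⟩ := hx; exact h j
  | zero => exact ⟨0, by simp⟩
  | add x x' _ _ hx hx' =>
    obtain ⟨k, hk⟩ := hx
    obtain ⟨k', hk'⟩ := hx'
    exact ⟨k + k', by rw [dotProduct_add, hk, hk', Int.cast_add]⟩
  | smul a x _ hx =>
    obtain ⟨k, hk⟩ := hx
    exact ⟨a * k, by rw [dotProduct_smul, hk, zsmul_eq_mul, Int.cast_mul]⟩

theorem sum_zsmul_transpose_eq_mulVec {m n : Type*} [Fintype m] (A : Matrix n m ℝ) (z : m → ℤ) :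
    ∑ i, z i • Aᵀ i = A *ᵥ fun i => (z i : ℝ) := by
  rw [← vecMul_transpose, vecMul_eq_sum]
  simp only [Int.cast_smul_eq_zsmul]

theorem dualLattice_span_rows {n : ℕ} {M : Matrix (Fin n) (Fin n) ℝ} (hM : IsUnit M.det) :
    dualLattice n (span ℤ (Set.range M)) = span ℤ (Set.range M⁻¹ᵀ) := by
  ext y
  rw [SetLike.mem_coe, mem_span_range_iff_exists_fun ℤ (v := (M⁻¹ᵀ : Fin n → Fin n → ℝ))]
  refine (mem_dualLattice_span_iff M y).trans ?_
  simp only [sum_zsmul_transpose_eq_mulVec]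
  constructor
  · intro h
    choose k hk using h
    refine ⟨k, ?_⟩
    have hMy : M *ᵥ y = fun j => (k j : ℝ) := funext fun j => (dotProduct_comm _ _).trans (hk j)
    rw [← hMy, mulVec_mulVec, nonsing_inv_mul M hM, one_mulVec]
  · rintro ⟨z, rfl⟩ j
    refine ⟨z j, ?_⟩
    rw [dotProduct_comm]
    change (M *ᵥ M⁻¹ *ᵥ _) j = _
    rw [mulVec_mulVec, mul_nonsing_inv M hM, one_mulVec]

theorem transference_lp_lt_two_general (n : ℕ) (b : Fin n → Fin n → ℝ)
    (hb : LinearIndependent ℝ b) (Λ : Set (Fin n → ℝ))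
    (hΛ : Λ = {x | ∃ z : Fin n → ℤ, x = ∑ i, z i • b i})
    (P : ℝ) (hP1 : 1 ≤ P) :
    lpDistR n P Λ * lpDistR n P (dualLattice n Λ) ≤ (n : ℝ) ^ (2 / P) := by
  set M : Matrix (Fin n) (Fin n) ℝ := of b
  have hM : IsUnit M.det :=
    (isUnit_iff_isUnit_det M).mp (linearIndependent_rows_iff_isUnit.mp hb)
  have hP : 0 < P := by linarith
  have hdet_pos : 0 < |M.det| := abs_pos.mpr hM.ne_zero
  have hdet_dual : |M⁻¹ᵀ.det| = |M.det|⁻¹ := by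
    rw [det_transpose, det_nonsing_inv, Ring.inverse_eq_inv', abs_inv]
  have hΛM : Λ = span ℤ (Set.range M) := hΛ.trans (setOf_exists_sum_zsmul_eq_span b)
  rw [hΛM, dualLattice_span_rows hM]
  calc _ ≤ ((n : ℝ) ^ (1 / P) * |M.det| ^ ((n : ℝ)⁻¹)) *
        ((n : ℝ) ^ (1 / P) * |M⁻¹ᵀ.det| ^ ((n : ℝ)⁻¹)) :=
        mul_le_mul (lpDistR_span_rows_le hP hM.ne_zero)
          (lpDistR_span_rows_le hP (abs_pos.mp (hdet_dual ▸ inv_pos.mpr hdet_pos)))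
          (lpDistR_nonneg _) (by positivity)
    _ = (n : ℝ) ^ (2 / P) := by
        rw [hdet_dual, Real.inv_rpow hdet_pos.le, mul_mul_mul_comm,
          mul_inv_cancel₀ (by positivity), mul_one,
          ← Real.rpow_add' (Nat.cast_nonneg n) (by positivity)]
        ring_nf

/-- For a full-rank lattice `Λ ⊆ ℝⁿ` and any real `1 ≤ P < 2`,
one has `d_P(Λ) · d_P(Λ*) ≤ n^(2/P)`. -/
theorem transference_lp_lt_two (n : ℕ) (b : Fin n → Fin n → ℝ)
    (hb : LinearIndependent ℝ b) (Λ : Set (Fin n → ℝ))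
    (hΛ : Λ = {x | ∃ z : Fin n → ℤ, x = ∑ i, z i • b i})
    (P : ℝ) (hP1 : 1 ≤ P) (hP2 : P < 2) :
    lpDistR n P Λ * lpDistR n P (dualLattice n Λ) ≤ (n : ℝ) ^ (2 / P) :=
  transference_lp_lt_two_general n b hb Λ hΛ P hP1
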